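/- arXiv:1510.08056 — 2 statements merged into one kernel-verified Lean document; each statement's English description precedes it below -/
import Mathlib

section
/- Let k ≥ 1 be an integer and let c₀, c₁ ∈ ℂ both be nonzero. Then the polynomial F(X) = c₀·X^k + c₁·(X − 1)^k ∈ ℂ[X] has no repeated roots: for every t₀ ∈ ℂ, the root multiplicity of F at t₀ is at most 1. In particular, for k ≥ 2 there is no t₀ ∈ ℂ with t₀ ≠ 0 and t₀ ≠ 1 such that (X − t₀)^k divides F(X). -/
open Polynomial

/-- For `k ≥ 1` and nonzero `c₀, c₁ ∈ ℂ`, the polynomial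
`F = c₀ X^k + c₁ (X-1)^k` has no repeated roots: the root multiplicity of `F`
at every `t₀ ∈ ℂ` is at most `1`.  In particular, for `k ≥ 2` there is no
`t₀ ∈ ℂ` with `t₀ ≠ 0`, `t₀ ≠ 1` such that `(X - t₀)^k` divides `F`. -/
theorem stmt_4 (k : ℕ) (hk : 1 ≤ k) (c₀ c₁ : ℂ) (h₀ : c₀ ≠ 0) (h₁ : c₁ ≠ 0) :
    (∀ t₀ : ℂ, rootMultiplicity t₀ (C c₀ * X ^ k + C c₁ * (X - 1) ^ k) ≤ 1) ∧
    (2 ≤ k → ¬ ∃ t₀ : ℂ, t₀ ≠ 0 ∧ t₀ ≠ 1 ∧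
      (X - C t₀) ^ k ∣ (C c₀ * X ^ k + C c₁ * (X - 1) ^ k)) := by
  obtain ⟨m, rfl⟩ : ∃ m, k = m + 1 := ⟨k - 1, (Nat.succ_pred_eq_of_pos hk).symm⟩
  set F : ℂ[X] := C c₀ * X ^ (m+1) + C c₁ * (X - 1) ^ (m+1) with hF
  have hF0 : F ≠ 0 := by
    intro h
    have h1 : F.eval 1 = 0 := by rw [h]; simp
    simp [hF] at h1
    exact h₀ h1
  have key : ∀ t : ℂ, rootMultiplicity t F ≤ 1 := by
    intro t
    by_contra hcon
    push_neg at hcon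
    obtain ⟨g, hg⟩ : (X - C t) ^ 2 ∣ F := (le_rootMultiplicity_iff hF0).mp hcon
    have hEv : F.eval t = 0 := by rw [hg]; simp
    have hEv' : (derivative F).eval t = 0 := by
      rw [hg]
      simp [derivative_mul, derivative_pow]
    have e1 : c₀ * t ^ (m+1) + c₁ * (t-1) ^ (m+1) = 0 := by
      simpa [hF] using hEv
    have e2 : c₀ * t ^ m + c₁ * (t-1) ^ m = 0 := by
      simp only [hF] at hEv'
      simp [derivative_pow] at hEv'
      have hm1 : ((m:ℂ)+1) ≠ 0 := Nat.cast_add_one_ne_zero m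
      have hh : ((m:ℂ)+1) * (c₀ * t ^ m + c₁ * (t-1) ^ m) = 0 := by
        linear_combination hEv'
      exact (mul_eq_zero.mp hh).resolve_left hm1
    have e1' : c₀ * (t ^ m * t) + c₁ * ((t-1) ^ m * (t-1)) = 0 := by
      rw [pow_succ, pow_succ] at e1; exact e1
    have e3 : c₁ * (t-1) ^ m = 0 := by linear_combination t * e2 - e1'
    have h5 : (t-1) ^ m = 0 := (mul_eq_zero.mp e3).resolve_left h₁
    obtain ⟨ht1, hm0⟩ := pow_eq_zero_iff'.mp h5
    have ht : t = 1 := by linear_combination ht1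
    rw [ht] at e2
    simp [zero_pow hm0] at e2
    exact h₀ e2
  refine ⟨key, ?_⟩
  rintro hk2 ⟨t, -, -, hdvd⟩
  have h2 : (2:ℕ) ≤ rootMultiplicity t F :=
    (le_rootMultiplicity_iff hF0).mpr (dvd_trans (pow_dvd_pow _ hk2) hdvd)
  exact absurd (le_trans h2 (key t)) (by norm_num)
end

section
/- Let R be a commutative ℚ-algebra and R[z] the polynomial ring in one variable z. Let i ≥ 1 be an integer, let u₀, v_i, w_{2i} ∈ R, let U, V, W ∈ R[z], and set u = u₀ + z·U, v = v_i·z^i + z^(i+1)·V, w = w_{2i}·z^(2i) + z^(2i+1)·W, f = −(1/3)·u² + v, and g = (2/27)·u³ − (1/3)·u·v + w in R[z]. Then 4·f³ + 27·g² ≡ u₀²·(4·u₀·w_{2i} − v_i²)·z^(2i) (mod z^(2i+1)). -/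
/-!
Eliminating the rational constants, `4f³ + 27g² = 4v³ - u²v² + 4u³w - 18uvw + 27w²`.
Writing `v = zⁱ v'` and `w = z²ⁱ w'`, every term other than `-u²v² + 4u³w` carries a factor
`z³ⁱ` or `z⁴ⁱ`, hence vanishes modulo `z²ⁱ⁺¹` as `i ≥ 1`; what remains is
`z²ⁱ (4u³w' - u²v'²)`, and modulo `z` the cofactor is its value at `z = 0`.
-/

open Polynomial

theorem four_mul_cube_add_27_mul_sq_of_three_mul_eq_one {S : Type*} [CommRing S]
    {a : S} (h3 : 3 * a = 1) (u v w : S) :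
    4 * (-a * u ^ 2 + v) ^ 3 + 27 * (2 * a ^ 3 * u ^ 3 - a * u * v + w) ^ 2 =
      4 * v ^ 3 - u ^ 2 * v ^ 2 + 4 * u ^ 3 * w - 18 * u * v * w + 27 * w ^ 2 := by
  -- the coefficient of each monomial in `u, v, w` of the difference is a multiple of `3a - 1`
  linear_combination (4 * a ^ 3 * (9 * a ^ 2 + 3 * a + 1) * u ^ 6
    - 12 * a ^ 2 * (3 * a + 1) * u ^ 4 * v + (9 * a - 1) * u ^ 2 * v ^ 2
    + 4 * (9 * a ^ 2 + 3 * a + 1) * u ^ 3 * w - 18 * u * v * w) * h3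

theorem four_mul_cube_add_27_mul_sq {S : Type*} [CommRing S] [Algebra ℚ S] (u v w : S) :
    4 * (-algebraMap ℚ S (1 / 3) * u ^ 2 + v) ^ 3 +
        27 * (algebraMap ℚ S (2 / 27) * u ^ 3 - algebraMap ℚ S (1 / 3) * u * v + w) ^ 2 =
      4 * v ^ 3 - u ^ 2 * v ^ 2 + 4 * u ^ 3 * w - 18 * u * v * w + 27 * w ^ 2 := by
  have h3 : 3 * algebraMap ℚ S (1 / 3) = 1 := by
    rw [← map_ofNat (algebraMap ℚ S) 3, ← map_mul]
    norm_num
  have h2_27 : algebraMap ℚ S (2 / 27) = 2 * algebraMap ℚ S (1 / 3) ^ 3 := by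
    rw [← map_pow, ← map_ofNat (algebraMap ℚ S) 2, ← map_mul]
    norm_num
  rw [h2_27]
  exact four_mul_cube_add_27_mul_sq_of_three_mul_eq_one h3 u v w

theorem X_pow_succ_dvd_X_pow_mul_sub {R : Type*} [CommRing R] {p : R[X]} {c : R}
    (h : p.eval 0 = c) (n : ℕ) : X ^ (n + 1) ∣ X ^ n * p - C c * X ^ n := by
  rw [mul_comm (C c), ← mul_sub, pow_succ]
  refine mul_dvd_mul_left _ ?_
  rw [X_dvd_iff, coeff_sub, coeff_C_zero, coeff_zero_eq_eval_zero, h, sub_self]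

/-- Residual discriminant for a Kodaira type I_n fiber with `n = 2i` even, in the
inductive Tate form: with `u = u₀ + zU`, `v = vᵢ z^i + z^(i+1) V`,
`w = w₂ᵢ z^(2i) + z^(2i+1) W`, `f = -(1/3)u² + v`, `g = (2/27)u³ - (1/3)uv + w`,
one has `4f³ + 27g² ≡ u₀²(4u₀w₂ᵢ - vᵢ²) z^(2i) (mod z^(2i+1))`. -/
theorem stmt_13 {R : Type*} [CommRing R] [Algebra ℚ R]
    (i : ℕ) (hi : 1 ≤ i) (u₀ vi w2i : R) (U V W u v w f g : Polynomial R)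
    (hu : u = C u₀ + X * U)
    (hv : v = C vi * X ^ i + X ^ (i + 1) * V)
    (hw : w = C w2i * X ^ (2 * i) + X ^ (2 * i + 1) * W)
    (hf : f = C (-(algebraMap ℚ R (1/3))) * u ^ 2 + v)
    (hg : g = C ((algebraMap ℚ R (2/27))) * u ^ 3 -
      C ((algebraMap ℚ R (1/3))) * u * v + w) :
    X ^ (2 * i + 1) ∣ 4 * f ^ 3 + 27 * g ^ 2 -
      C (u₀ ^ 2 * (4 * u₀ * w2i - vi ^ 2)) * X ^ (2 * i) := by
  set v' := C vi + X * V
  set w' := C w2i + X * W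
  have hv' : v = X ^ i * v' := by rw [hv]; ring
  have hw' : w = X ^ (2 * i) * w' := by rw [hw]; ring
  have hdisc : 4 * f ^ 3 + 27 * g ^ 2 = X ^ (2 * i) * (4 * u ^ 3 * w' - u ^ 2 * v' ^ 2 +
      X ^ i * (4 * v' ^ 3 - 18 * u * v' * w' + 27 * X ^ i * w' ^ 2)) := by
    rw [hf, hg, map_neg, ← Polynomial.algebraMap_apply, ← Polynomial.algebraMap_apply,
      four_mul_cube_add_27_mul_sq, hv', hw']
    ring
  rw [hdisc]
  apply X_pow_succ_dvd_X_pow_mul_sub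
  simp only [v', w', hu, eval_add, eval_sub, eval_mul, eval_ofNat, eval_pow, eval_C, eval_X,
    zero_mul, add_zero, mul_zero, zero_pow (by omega : i ≠ 0)]
  ring
end
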